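/- arXiv:1903.01211 — 2 statements merged into one kernel-verified Lean document; each statement's English description precedes it below -/
import Mathlib

section
/- Let P be a subsingleton type and suppose the type D := P ⊕ (P → Empty) ⊕ Unit is algebraically flabby. Then P is decidable, i.e., P ⊕ (P → Empty) has a point. -/
universe u

/-- Algebraic flabbiness: a designated element agreeing with any
map from a subsingleton. -/
def AlgFlabby (D : Type v) : Type (max (u + 1) v) :=
  ∀ P : Type u, Subsingleton P → ∀ f : P → D, Σ' d : D, ∀ p : P, d = f p

theorem stmt_18 (P : Type u) (hP : Subsingleton P)
    (flab : AlgFlabby.{u} (P ⊕ ((P → Empty) ⊕ Unit))) :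
    Nonempty (P ⊕ (P → Empty)) := by
  have hQ : Subsingleton (P ⊕ (P → Empty)) := by
    constructor
    rintro (p | np) (q | nq)
    · exact congrArg Sum.inl (Subsingleton.elim p q)
    · exact (nq p).elim
    · exact (np q).elim
    · exact congrArg Sum.inr (funext fun p => (np p).elim)
  obtain ⟨d, hd⟩ := flab (P ⊕ (P → Empty)) hQ
    (fun q => match q with
      | Sum.inl p => Sum.inl p
      | Sum.inr np => Sum.inr (Sum.inl np))
  rcases d with p | np | u
  · exact ⟨Sum.inl p⟩
  · exact ⟨Sum.inr np⟩
  · -- impossible: Q must be empty, but then P → Empty gives a member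
    have np : P → Empty := fun p => by simpa using hd (Sum.inl p)
    simpa using hd (Sum.inr np)
end

section
/- All pointed types are algebraically flabby if and only if excluded middle holds: (Π (D : Type u) (d : D), algebraic flabbiness of D) ↔ (Π (P : Type u), Subsingleton P → P ⊕ (P → Empty)). -/
universe u

theorem stmt_19 :
    Nonempty (∀ (D : Type u) (_ : D), AlgFlabby.{u} D) ↔
    Nonempty (∀ P : Type u, Subsingleton P → P ⊕ (P → Empty)) := by
  constructor
  · rintro ⟨flab⟩
    refine ⟨fun P inst => ?_⟩
    obtain ⟨d, hd⟩ := flab (P ⊕ ((P → Empty) ⊕ Unit)) (Sum.inr (Sum.inr ()))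
      P inst (fun p => Sum.inl p)
    match d, hd with
    | Sum.inl p, _ => exact Sum.inl p
    | Sum.inr (Sum.inl g), _ => exact Sum.inr g
    | Sum.inr (Sum.inr _), hd =>
      exact Sum.inr (fun p => by cases hd p)
  · rintro ⟨lem⟩
    refine ⟨fun D d P inst f => ?_⟩
    rcases lem P inst with p | g
    · exact ⟨f p, fun q => congrArg f (Subsingleton.elim p q)⟩
    · exact ⟨d, fun p => (g p).elim⟩
end
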